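/- Fix θ₀ > 0 and let X ∈ {−1,1}ⁿ have the Curie–Weiss distribution P_{θ₀,CW}. Then P( there exists i ∈ {1,…,n} with Σ_{j ≠ i} X_j = 0 ) → 0 as n → ∞. -/

import Mathlib

open MeasureTheory Filter
open scoped ENNReal

noncomputable def spin (b : Bool) : ℝ := if b then 1 else -1

noncomputable def mag (n : ℕ) (x : Fin n → Bool) : ℝ := (∑ i, spin (x i)) / n

/-- Unnormalized Curie–Weiss measure on `{-1,1}ⁿ` (encoded by `Fin n → Bool`). -/
noncomputable def cwUnnorm (n : ℕ) (θ : ℝ) : Measure (Fin n → Bool) :=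
  ∑ x : Fin n → Bool,
    ENNReal.ofReal (Real.exp ((n : ℝ) * θ * mag n x ^ 2 / 2)) • Measure.dirac x

/-- The Curie–Weiss model `P_{θ,CW}`. -/
noncomputable def cwMeasure (n : ℕ) (θ : ℝ) : Measure (Fin n → Bool) :=
  (cwUnnorm n θ Set.univ)⁻¹ • cwUnnorm n θ

theorem lemA (m : ℕ) : (2*m+1) * (Nat.centralBinom m)^2 ≤ 16^m := by
  induction m with
  | zero => simp [Nat.centralBinom]
  | succ m ih =>
    have key : (m+1) * Nat.centralBinom (m+1) = 2 * (2*m+1) * Nat.centralBinom m :=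
      Nat.succ_mul_centralBinom_succ m
    have h2 : (m+1)^2 * ((2*(m+1)+1) * Nat.centralBinom (m+1)^2)
        = (2*(m+1)+1) * (4 * (2*m+1)) * ((2*m+1) * Nat.centralBinom m ^2) := by
      have h1' : ((m+1) * Nat.centralBinom (m+1))^2 = 4*(2*m+1)^2* Nat.centralBinom m^2 := by
        rw [key]; ring
      calc (m+1)^2 * ((2*(m+1)+1) * Nat.centralBinom (m+1)^2)
          = (2*(m+1)+1) * (((m+1) * Nat.centralBinom (m+1))^2) := by ring
        _ = (2*(m+1)+1) * (4*(2*m+1)^2* Nat.centralBinom m^2) := by rw [h1']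
        _ = (2*(m+1)+1) * (4 * (2*m+1)) * ((2*m+1) * Nat.centralBinom m ^2) := by ring
    have h3 : (2*(m+1)+1) * (4*(2*m+1)) ≤ 16 * (m+1)^2 := by nlinarith
    have h4 : (m+1)^2 * ((2*(m+1)+1) * Nat.centralBinom (m+1)^2)
        ≤ (m+1)^2 * (16 * 16^m) := by
      calc (m+1)^2 * ((2*(m+1)+1) * Nat.centralBinom (m+1)^2)
          = (2*(m+1)+1) * (4 * (2*m+1)) * ((2*m+1) * Nat.centralBinom m ^2) := h2
        _ ≤ (16 * (m+1)^2) * 16^m := Nat.mul_le_mul h3 ih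
        _ = (m+1)^2 * (16 * 16^m) := by ring
    have := Nat.le_of_mul_le_mul_left h4 (by positivity)
    calc (2*(m+1)+1) * Nat.centralBinom (m+1)^2 ≤ 16 * 16^m := this
      _ = 16^(m+1) := by ring

theorem countlem (n k : ℕ) :
    (Finset.univ.filter fun x : Fin n → Bool =>
      (Finset.univ.filter fun i => x i = true).card = k).card = n.choose k := by
  rw [show n.choose k = (Finset.univ : Finset (Fin n)).card.choose k by rw [Finset.card_fin],
    ← Finset.card_powersetCard k (Finset.univ : Finset (Fin n))]
  refine Finset.card_nbij' (fun x => Finset.univ.filter fun i => x i = true)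
    (fun s i => decide (i ∈ s)) ?_ ?_ ?_ ?_
  · intro x hx
    simp only [Finset.mem_coe, Finset.mem_filter, Finset.mem_univ, true_and] at hx
    simp [Finset.mem_powersetCard, hx]
  · intro s hs
    simp only [Finset.mem_coe, Finset.mem_powersetCard] at hs
    simp only [Finset.mem_coe, Finset.mem_filter, Finset.mem_univ, true_and]
    rw [← hs.2]
    congr 1
    ext i
    simp
  · intro x hx
    ext i
    simp
  · intro s hs
    ext i
    simp

theorem cwUnnorm_apply (n : ℕ) (θ : ℝ) (s : Set (Fin n → Bool)) :
    cwUnnorm n θ s = ∑ x : Fin n → Bool,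
      ENNReal.ofReal (Real.exp ((n : ℝ) * θ * mag n x ^ 2 / 2)) * s.indicator 1 x := by
  have hs : MeasurableSet s := (Set.to_countable s).measurableSet
  simp [cwUnnorm, Measure.finset_sum_apply, Measure.smul_apply, Measure.dirac_apply' _ hs,
    smul_eq_mul]

theorem sum_spin_eq (n : ℕ) (x : Fin n → Bool) :
    ∑ i, spin (x i) = 2 * ((Finset.univ.filter fun i => x i = true).card : ℝ) - n := by
  have h1 : ∀ i : Fin n, spin (x i) = 2 * (if x i = true then (1:ℝ) else 0) - 1 := by
    intro i; cases x i <;> norm_num [spin]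
  rw [Finset.sum_congr rfl (fun i _ => h1 i), Finset.sum_sub_distrib, ← Finset.mul_sum,
    Finset.sum_boole, Finset.sum_const, Finset.card_fin]
  simp

theorem cb_real_bound (m : ℕ) :
    (Nat.centralBinom m : ℝ) ≤ 4^m / Real.sqrt (2*m+1) := by
  have hs : (0:ℝ) < Real.sqrt (2*m+1) := Real.sqrt_pos.2 (by positivity)
  rw [le_div_iff₀ hs]
  have hsq : ((Nat.centralBinom m : ℝ) * Real.sqrt (2*m+1))^2 ≤ ((4:ℝ)^m)^2 := by
    have h := lemA m
    have h' : ((2*m+1) * (Nat.centralBinom m)^2 : ℝ) ≤ (16:ℝ)^m := by exact_mod_cast h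
    calc ((Nat.centralBinom m : ℝ) * Real.sqrt (2*m+1))^2
        = (Nat.centralBinom m : ℝ)^2 * (Real.sqrt (2*m+1))^2 := by ring
      _ = (Nat.centralBinom m : ℝ)^2 * (2*m+1) := by
          rw [Real.sq_sqrt (by positivity)]
      _ ≤ (16:ℝ)^m := by linarith [h']
      _ = ((4:ℝ)^m)^2 := by
          rw [← pow_mul, show (16:ℝ) = 4^2 by norm_num, ← pow_mul, mul_comm m 2]
  exact (pow_le_pow_iff_left₀ (by positivity) (by positivity) two_ne_zero).1 hsq

theorem main_bound (θ₀ : ℝ) (hθ : 0 < θ₀) (n : ℕ) (hn : 1 ≤ n) :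
    cwMeasure n θ₀ {x | ∃ i : Fin n, ∑ j ∈ Finset.univ.erase i, spin (x j) = 0}
      ≤ ENNReal.ofReal (2 * Real.exp (θ₀/2) / Real.sqrt n) := by
  classical
  have hn' : (1:ℝ) ≤ n := by exact_mod_cast hn
  have hsqn : (0:ℝ) < Real.sqrt n := Real.sqrt_pos.2 (by linarith)
  set A : Set (Fin n → Bool) :=
    {x | (∑ i, spin (x i)) = 1 ∨ (∑ i, spin (x i)) = -1} with hA
  set F : Finset (Fin n → Bool) := Finset.univ.filter (fun x => x ∈ A) with hF
  -- E ⊆ A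
  have hEA : {x : Fin n → Bool | ∃ i : Fin n, ∑ j ∈ Finset.univ.erase i, spin (x j) = 0} ⊆ A := by
    rintro x ⟨i, hi⟩
    have h := Finset.sum_erase_add Finset.univ (fun j => spin (x j)) (Finset.mem_univ i)
    rw [hi, zero_add] at h
    cases hb : x i
    · right; rw [← h]; simp [spin, hb]
    · left; rw [← h]; simp [spin, hb]
  -- membership of F gives a nat equation on the number of trues
  have hmem : ∀ x ∈ F, 2 * (Finset.univ.filter fun i => x i = true).card = n + 1 ∨
      2 * (Finset.univ.filter fun i => x i = true).card + 1 = n := by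
    intro x hx
    rw [hF, Finset.mem_filter] at hx
    have hs := sum_spin_eq n x
    rcases hx.2 with h | h
    · left
      have : (2 * ((Finset.univ.filter fun i => x i = true).card : ℝ)) = n + 1 := by
        rw [hs] at h; linarith
      exact_mod_cast this
    · right
      have : (2 * ((Finset.univ.filter fun i => x i = true).card : ℝ) + 1) = n := by
        rw [hs] at h; linarith
      exact_mod_cast this
  -- cardinality bound
  have hcard : (F.card : ℝ) ≤ 2 * 2^n / Real.sqrt n := by
    rcases Nat.even_or_odd n with ⟨k, hk⟩ | ⟨m, hm⟩
    · have : F = ∅ := by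
        rw [Finset.eq_empty_iff_forall_notMem]
        intro x hx
        rcases hmem x hx with h | h <;> omega
      rw [this]
      simp only [Finset.card_empty, Nat.cast_zero]
      positivity
    · have hsub : F ⊆ (Finset.univ.filter fun x : Fin n → Bool =>
            (Finset.univ.filter fun i => x i = true).card = m+1) ∪
          (Finset.univ.filter fun x : Fin n → Bool =>
            (Finset.univ.filter fun i => x i = true).card = m) := by
        intro x hx
        rcases hmem x hx with h | h
        · exact Finset.mem_union_left _ (by
            simp only [Finset.mem_filter, Finset.mem_univ, true_and]; omega)
        · exact Finset.mem_union_right _ (by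
            simp only [Finset.mem_filter, Finset.mem_univ, true_and]; omega)
      have hc1 : F.card ≤ n.choose (m+1) + n.choose m := by
        calc F.card ≤ _ := Finset.card_le_card hsub
          _ ≤ _ := Finset.card_union_le _ _
          _ = n.choose (m+1) + n.choose m := by rw [countlem, countlem]
      have hch1 : n.choose (m+1) ≤ 2 * Nat.centralBinom m := by
        rw [hm]
        show ((2*m)+1).choose (m+1) ≤ 2 * Nat.centralBinom m
        rw [Nat.choose_succ_succ]
        have a1 : (2*m).choose m ≤ Nat.centralBinom m := Nat.choose_le_centralBinom m m
        have a2 : (2*m).choose (m+1) ≤ Nat.centralBinom m := Nat.choose_le_centralBinom (m+1) m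
        simp only [Nat.succ_eq_add_one]
        omega
      have hch2 : n.choose m ≤ 2 * Nat.centralBinom m := by
        have hsymm : n.choose (n - (m+1)) = n.choose (m+1) :=
          Nat.choose_symm (by omega)
        have : n - (m+1) = m := by omega
        rw [this] at hsymm
        omega
      have hc2 : (F.card : ℝ) ≤ 4 * Nat.centralBinom m := by
        have : F.card ≤ 4 * Nat.centralBinom m := by omega
        exact_mod_cast this
      have hcb := cb_real_bound m
      calc (F.card : ℝ) ≤ 4 * Nat.centralBinom m := hc2
        _ ≤ 4 * (4^m / Real.sqrt (2*m+1)) := by linarith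
        _ = 2 * 2^n / Real.sqrt n := by
            rw [hm]
            have h2n : (2:ℝ)^(2*m+1) = 2 * 4^m := by
              rw [pow_succ, pow_mul]; norm_num; ring
            have hcast : ((2*m+1 : ℕ) : ℝ) = 2*(m:ℝ)+1 := by push_cast; ring
            rw [h2n, hcast]
            field_simp
            ring
  -- upper bound on unnormalized measure of A
  have hUA : cwUnnorm n θ₀ A ≤ (F.card : ℝ≥0∞) * ENNReal.ofReal (Real.exp (θ₀/2)) := by
    rw [cwUnnorm_apply]
    have e1 : ∑ x : Fin n → Bool,
        ENNReal.ofReal (Real.exp ((n : ℝ) * θ₀ * mag n x ^ 2 / 2)) * A.indicator 1 x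
        = ∑ x ∈ F, ENNReal.ofReal (Real.exp ((n : ℝ) * θ₀ * mag n x ^ 2 / 2)) := by
      rw [hF, Finset.sum_filter]
      refine Finset.sum_congr rfl fun x _ => ?_
      by_cases hx : x ∈ A <;> simp [Set.indicator_apply, hx]
    rw [e1]
    have e2 : ∀ x ∈ F, ENNReal.ofReal (Real.exp ((n : ℝ) * θ₀ * mag n x ^ 2 / 2))
        ≤ ENNReal.ofReal (Real.exp (θ₀/2)) := by
      intro x hx
      apply ENNReal.ofReal_le_ofReal
      apply Real.exp_le_exp.2
      have hxA : x ∈ A := (Finset.mem_filter.1 (hF ▸ hx)).2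
      have hnz : (n:ℝ) ≠ 0 := by linarith
      have hmag : mag n x ^ 2 = 1 / (n:ℝ)^2 := by
        rcases hxA with h | h <;> rw [mag, h] <;> rw [div_pow] <;> norm_num
      rw [hmag]
      have heq : (n:ℝ) * θ₀ * (1 / (n:ℝ)^2) / 2 = θ₀ / (2*n) := by
        field_simp
      rw [heq]
      apply div_le_div_of_nonneg_left hθ.le (by norm_num)
      linarith
    calc ∑ x ∈ F, ENNReal.ofReal (Real.exp ((n : ℝ) * θ₀ * mag n x ^ 2 / 2))
        ≤ ∑ y ∈ F, ENNReal.ofReal (Real.exp (θ₀/2)) := Finset.sum_le_sum e2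
      _ = (F.card : ℝ≥0∞) * ENNReal.ofReal (Real.exp (θ₀/2)) := by
          rw [Finset.sum_const, nsmul_eq_mul]
  -- lower bound on the partition function
  have hZ : (2^n : ℝ≥0∞) ≤ cwUnnorm n θ₀ Set.univ := by
    rw [cwUnnorm_apply]
    calc (2^n : ℝ≥0∞) = ∑ _x : Fin n → Bool, (1:ℝ≥0∞) := by
          simp [Finset.card_univ]
      _ ≤ _ := by
          refine Finset.sum_le_sum fun x _ => ?_
          simp only [Set.indicator_univ, Pi.one_apply, mul_one]
          rw [ENNReal.one_le_ofReal]
          exact Real.one_le_exp (by positivity)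
  -- put everything together
  rw [cwMeasure, Measure.smul_apply, smul_eq_mul]
  calc (cwUnnorm n θ₀ Set.univ)⁻¹ *
        cwUnnorm n θ₀ {x | ∃ i : Fin n, ∑ j ∈ Finset.univ.erase i, spin (x j) = 0}
      ≤ (cwUnnorm n θ₀ Set.univ)⁻¹ * cwUnnorm n θ₀ A :=
        mul_le_mul_right (measure_mono hEA) _
    _ ≤ (2^n : ℝ≥0∞)⁻¹ * ((F.card : ℝ≥0∞) * ENNReal.ofReal (Real.exp (θ₀/2))) :=
        mul_le_mul' (ENNReal.inv_le_inv' hZ) hUA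
    _ ≤ ENNReal.ofReal (2 * Real.exp (θ₀/2) / Real.sqrt n) := by
        have h2 : (2^n : ℝ≥0∞) = ENNReal.ofReal ((2:ℝ)^n) := by
          rw [ENNReal.ofReal_pow (by norm_num)]
          norm_num
        rw [h2, ← ENNReal.ofReal_inv_of_pos (by positivity),
          show (F.card : ℝ≥0∞) = ENNReal.ofReal (F.card : ℝ) by
            rw [ENNReal.ofReal_natCast],
          ← ENNReal.ofReal_mul (by positivity), ← ENNReal.ofReal_mul (by positivity)]
        apply ENNReal.ofReal_le_ofReal
        have hp : (0:ℝ) < 2^n := by positivity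
        have h1 : (F.card : ℝ) * Real.exp (θ₀/2)
            ≤ (2 * 2^n / Real.sqrt n) * Real.exp (θ₀/2) :=
          mul_le_mul_of_nonneg_right hcard (Real.exp_nonneg _)
        have h3 : ((2:ℝ)^n)⁻¹ * ((2 * 2^n / Real.sqrt n) * Real.exp (θ₀/2))
            = 2 * Real.exp (θ₀/2) / Real.sqrt n := by
          field_simp
        calc ((2:ℝ)^n)⁻¹ * ((F.card : ℝ) * Real.exp (θ₀/2))
            ≤ ((2:ℝ)^n)⁻¹ * ((2 * 2^n / Real.sqrt n) * Real.exp (θ₀/2)) :=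
              mul_le_mul_of_nonneg_left h1 (by positivity)
          _ = 2 * Real.exp (θ₀/2) / Real.sqrt n := h3

theorem stmt16 (θ₀ : ℝ) (hθ : 0 < θ₀) :
    Tendsto (fun n : ℕ =>
        cwMeasure n θ₀ {x | ∃ i : Fin n, ∑ j ∈ Finset.univ.erase i, spin (x j) = 0})
      atTop (nhds 0) := by
  have hsqrt : Tendsto (fun n : ℕ => Real.sqrt n) atTop atTop := by
    refine tendsto_atTop_atTop.2 fun b => ⟨⌈b^2⌉₊, fun n hn => ?_⟩
    rcases le_or_gt b 0 with hb | hb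
    · exact hb.trans (Real.sqrt_nonneg _)
    · rw [show b = Real.sqrt (b^2) by rw [Real.sqrt_sq hb.le]]
      apply Real.sqrt_le_sqrt
      calc b^2 ≤ ⌈b^2⌉₊ := Nat.le_ceil _
        _ ≤ n := by exact_mod_cast hn
  have hb : Tendsto (fun n : ℕ => ENNReal.ofReal (2 * Real.exp (θ₀/2) / Real.sqrt n))
      atTop (nhds 0) := by
    rw [show (0:ℝ≥0∞) = ENNReal.ofReal 0 by simp]
    apply ENNReal.tendsto_ofReal
    have h1 : Tendsto (fun n : ℕ => (Real.sqrt n)⁻¹) atTop (nhds 0) :=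
      hsqrt.inv_tendsto_atTop
    have h2 := h1.const_mul (2 * Real.exp (θ₀/2))
    rw [mul_zero] at h2
    simpa [div_eq_mul_inv] using h2
  refine tendsto_of_tendsto_of_tendsto_of_le_of_le' tendsto_const_nhds hb ?_ ?_
  · filter_upwards with n using zero_le
  · filter_upwards [eventually_ge_atTop 1] with n hn using main_bound θ₀ hθ n hn
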